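/- Fix real constants κ₁ < 0, κ₂ > 0, κ₃ > 0, α > 0, a > 0 and c ≥ 0. Let h : ℝ → ℝ be convex on (0, ∞) and monotone nondecreasing on (0, ∞). Then the function U(r_cpu, r_mem) = α·h(a·(g(r_cpu) + m(r_mem))) + c·r_cpu is convex on the open positive quadrant {(r_cpu, r_mem) : r_cpu > 0, r_mem > 0}. -/

import Mathlib

/-!
The load `a (g + m)` is convex and positive on the quadrant, so composing it with the convex
nondecreasing `h` keeps it convex. Convexity of `m = exp ∘ (κ₃ / ·)` is a composition of the same
kind. For `g`, rewrite `κ₁ / (1 - e^{κ₂ r}) = -κ₁ (1 - e^{-κ₂ r})⁻¹ + κ₁`: here the convex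
`e^{-κ₂ r}` takes values in `(-∞, 1)`, on which `y ↦ (1 - y)⁻¹` is convex and increasing.
-/

open Set Real

section Composition

variable {𝕜 E β γ : Type*} [Semiring 𝕜] [PartialOrder 𝕜] [AddCommMonoid E]
  [AddCommMonoid β] [PartialOrder β] [AddCommMonoid γ] [PartialOrder γ]
  [SMul 𝕜 E] [SMul 𝕜 β] [SMul 𝕜 γ] {s : Set E} {t : Set β} {f : E → β} {g : β → γ}

theorem ConvexOn.comp_of_mapsTo (hg : ConvexOn 𝕜 t g) (hf : ConvexOn 𝕜 s f)
    (hg' : MonotoneOn g t) (hst : MapsTo f s t) : ConvexOn 𝕜 s (g ∘ f) :=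
  ⟨hf.1, fun _ hx _ hy _ _ ha hb hab =>
    (hg' (hst (hf.1 hx hy ha hb hab)) (hg.1 (hst hx) (hst hy) ha hb hab)
      (hf.2 hx hy ha hb hab)).trans (hg.2 (hst hx) (hst hy) ha hb hab)⟩

theorem ConvexOn.comp_concaveOn_of_mapsTo (hg : ConvexOn 𝕜 t g) (hf : ConcaveOn 𝕜 s f)
    (hg' : AntitoneOn g t) (hst : MapsTo f s t) : ConvexOn 𝕜 s (g ∘ f) :=
  ⟨hf.1, fun _ hx _ hy _ _ ha hb hab =>
    (hg' (hg.1 (hst hx) (hst hy) ha hb hab) (hst (hf.1 hx hy ha hb hab))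
      (hf.2 hx hy ha hb hab)).trans (hg.2 (hst hx) (hst hy) ha hb hab)⟩

end Composition

section Product

variable {𝕜 E F β : Type*} [Semiring 𝕜] [PartialOrder 𝕜] [AddCommMonoid E] [AddCommMonoid F]
  [AddCommMonoid β] [PartialOrder β] [Module 𝕜 E] [Module 𝕜 F] [SMul 𝕜 β]
  {s : Set E} {t : Set F}

theorem ConvexOn.comp_fst {f : E → β} (hf : ConvexOn 𝕜 s f) (ht : Convex 𝕜 t) :
    ConvexOn 𝕜 (s ×ˢ t) fun p => f p.1 :=
  (hf.comp_linearMap (LinearMap.fst 𝕜 E F)).subset (fun _ hp => hp.1) (hf.1.prod ht)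

theorem ConvexOn.comp_snd {f : F → β} (hf : ConvexOn 𝕜 t f) (hs : Convex 𝕜 s) :
    ConvexOn 𝕜 (s ×ˢ t) fun p => f p.2 :=
  (hf.comp_linearMap (LinearMap.snd 𝕜 E F)).subset (fun _ hp => hp.2) (hs.prod hf.1)

end Product

section LinearOrderedField

variable {𝕜 : Type*} [Field 𝕜] [LinearOrder 𝕜] [IsStrictOrderedRing 𝕜]

theorem convexOn_inv_Ioi : ConvexOn 𝕜 (Ioi 0) fun x : 𝕜 => x⁻¹ := by
  simpa only [zpow_neg_one] using convexOn_zpow (𝕜 := 𝕜) (-1)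

theorem convexOn_inv_one_sub : ConvexOn 𝕜 (Iio 1) fun y : 𝕜 => (1 - y)⁻¹ :=
  convexOn_inv_Ioi.comp_concaveOn_of_mapsTo
    ((concaveOn_const 1 (convex_Iio 1)).sub (convexOn_id (convex_Iio 1)))
    (fun _ hx _ _ hxy => inv_anti₀ hx hxy) (fun _ hy => sub_pos.2 hy)

theorem monotoneOn_inv_one_sub : MonotoneOn (fun y : 𝕜 => (1 - y)⁻¹) (Iio 1) :=
  fun _ _ _ hy hxy => inv_anti₀ (sub_pos.2 hy) (sub_le_sub_left hxy 1)

end LinearOrderedField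

theorem div_one_sub_exp_eq {x : ℝ} (hx : x ≠ 0) (κ : ℝ) :
    κ / (1 - exp x) = -κ * (1 - exp (-x))⁻¹ + κ := by
  have he : exp x ≠ 1 := mt (exp_eq_one_iff x).1 hx
  rw [exp_neg]
  field_simp
  ring

theorem div_one_sub_exp_pos {κ x : ℝ} (hκ : κ < 0) (hx : 0 < x) : 0 < κ / (1 - exp x) :=
  div_pos_of_neg_of_neg hκ (sub_neg.2 (one_lt_exp_iff.2 hx))

theorem convexOn_exp_neg_mul (μ : ℝ) : ConvexOn ℝ univ fun r => exp (-(μ * r)) :=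
  (convexOn_exp.comp_linearMap ((-μ) • LinearMap.id)).congr fun r _ => by simp

theorem convexOn_div_one_sub_exp_mul {κ μ : ℝ} (hκ : κ ≤ 0) (hμ : 0 < μ) :
    ConvexOn ℝ (Ioi 0) fun r => κ / (1 - exp (μ * r)) := by
  have hmaps : MapsTo (fun r => exp (-(μ * r))) (Ioi 0) (Iio 1) := fun r hr =>
    exp_lt_one_iff.2 (neg_neg_of_pos (mul_pos hμ hr))
  have hconv := convexOn_inv_one_sub.comp_of_mapsTo
    ((convexOn_exp_neg_mul μ).subset (subset_univ _) (convex_Ioi 0)) monotoneOn_inv_one_sub hmaps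
  refine ((hconv.smul (neg_nonneg.2 hκ)).add_const κ).congr fun r hr => ?_
  simp [div_one_sub_exp_eq (mul_pos hμ hr).ne']

theorem convexOn_exp_div {κ : ℝ} (hκ : 0 ≤ κ) : ConvexOn ℝ (Ioi 0) fun r => exp (κ / r) :=
  (convexOn_exp.comp_of_mapsTo (convexOn_inv_Ioi.smul hκ) (exp_monotone.monotoneOn _)
    (mapsTo_univ _ _)).congr fun r _ => by simp [div_eq_mul_inv]

/-- Let `h : ℝ → ℝ` be convex and monotone nondecreasing on `(0, ∞)`. Then,
with `g(r) = κ₁/(1 − exp(κ₂·r))`, `m(r) = exp(κ₃/r)`, `α > 0`, `a > 0` and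
`c ≥ 0`, the function
`U(r_cpu, r_mem) = α·h(a·(g(r_cpu) + m(r_mem))) + c·r_cpu`
is convex on the open positive quadrant. -/
theorem composed_utility_convex
    (κ₁ κ₂ κ₃ α a c : ℝ)
    (hκ₁ : κ₁ < 0) (hκ₂ : 0 < κ₂) (hκ₃ : 0 < κ₃)
    (hα : 0 < α) (ha : 0 < a) (hc : 0 ≤ c)
    (h : ℝ → ℝ)
    (hconv : ConvexOn ℝ (Set.Ioi (0 : ℝ)) h)
    (hmono : MonotoneOn h (Set.Ioi (0 : ℝ))) :
    ConvexOn ℝ (Set.Ioi (0 : ℝ) ×ˢ Set.Ioi (0 : ℝ))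
      (fun p : ℝ × ℝ =>
        α * h (a * (κ₁ / (1 - Real.exp (κ₂ * p.1)) + Real.exp (κ₃ / p.2)))
          + c * p.1) := by
  have hload : ConvexOn ℝ (Ioi 0 ×ˢ Ioi 0)
      fun p : ℝ × ℝ => a * (κ₁ / (1 - exp (κ₂ * p.1)) + exp (κ₃ / p.2)) :=
    (((convexOn_div_one_sub_exp_mul hκ₁.le hκ₂).comp_fst (convex_Ioi 0)).add
      ((convexOn_exp_div hκ₃.le).comp_snd (convex_Ioi 0))).smul ha.le
  have hload_pos : MapsTo (fun p : ℝ × ℝ => a * (κ₁ / (1 - exp (κ₂ * p.1)) + exp (κ₃ / p.2)))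
      (Ioi 0 ×ˢ Ioi 0) (Ioi 0) := fun p hp =>
    mul_pos ha (add_pos (div_one_sub_exp_pos hκ₁ (mul_pos hκ₂ hp.1)) (exp_pos _))
  have hpower : ConvexOn ℝ (Ioi 0 ×ˢ Ioi 0) fun p : ℝ × ℝ => c * p.1 :=
    ((convexOn_id (convex_Ioi 0)).smul hc).comp_fst (convex_Ioi 0)
  exact ((hconv.comp_of_mapsTo hload hmono hload_pos).smul hα.le).add hpower
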